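/- (Dual certificate characterization of optimality.) Let ŷ ∈ ℝ^d, let V ∈ ℝ^{d×d} be symmetric positive definite, let E ∈ ℝ^{k×d}, and let γ ≥ 0. A point z* ∈ ℝ^d is a global minimizer of the primal objective −ŷᵀz + ½ zᵀVz + γ‖Ez‖₁ over ℝ^d if and only if there exists v ∈ ℝ^k with maxᵢ|vᵢ| ≤ γ, Vz* = ŷ − Eᵀv, and vᵀ(Ez*) = γ‖Ez*‖₁. -/

import Mathlib

/-!
Write `f` for the objective and `c = ŷ - V z*`. Sufficiency is the exact expansion
`f z = f z* - c ⬝ (z - z*) + ½ (z - z*)ᵀ V (z - z*) + γ (‖E z‖₁ - ‖E z*‖₁)`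
combined with `vᵀ E z ≤ γ ‖E z‖₁` for `‖v‖_∞ ≤ γ`.

For necessity, fix a direction `w` and put `x = E z*`, `u = E w`. For small `t > 0` every
coordinate of `x + t u` has a fixed sign `σᵢ` (that of `xᵢ`, or of `uᵢ` when `xᵢ = 0`), so
`‖x + t u‖₁ = ‖x‖₁ + t σ ⬝ u` exactly. Comparing `f (z* + t w)` with `f z*` and letting `t → 0⁺`
gives `c ⬝ w ≤ (Eᵀ (γ σ)) ⬝ w`, where `γ σ` satisfies the two scalar conditions on a certificate.
So no hyperplane separates `c` from the compact convex set `Eᵀ S`, `S` the set of those `v`,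
and hence `c ∈ Eᵀ S`.
-/

open Matrix Filter Topology Set

lemma setOf_forall_abs_le_eq_pi {ι : Type*} (γ : ℝ) :
    {v : ι → ℝ | ∀ i, |v i| ≤ γ} = univ.pi fun _ => Icc (-γ) γ := by
  ext v; simp only [mem_univ_pi, mem_Icc, ← abs_le]; rfl

lemma mem_of_forall_exists_dotProduct_le {ι : Type*} [Fintype ι] {K : Set (ι → ℝ)}
    (hconv : Convex ℝ K) (hclosed : IsClosed K) {c : ι → ℝ}
    (h : ∀ w, ∃ p ∈ K, c ⬝ᵥ w ≤ p ⬝ᵥ w) : c ∈ K := by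
  classical
  by_contra hc
  obtain ⟨f, u, hfK, hfc⟩ := geometric_hahn_banach_closed_point hconv hclosed hc
  set w : ι → ℝ := fun i => f fun j => if i = j then 1 else 0
  have hf : ∀ y, f y = y ⬝ᵥ w := LinearMap.pi_apply_eq_sum_univ f.toLinearMap
  obtain ⟨p, hpK, hle⟩ := h w
  linarith [hfK p hpK, hf p, hf c]

noncomputable def dirSign (a b : ℝ) : ℝ := if a = 0 then SignType.sign b else SignType.sign a

lemma dirSign_mul_self (a b : ℝ) : dirSign a b * a = |a| := by
  by_cases ha : a = 0 <;> simp [dirSign, ha]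

lemma abs_dirSign_le_one (a b : ℝ) : |dirSign a b| ≤ 1 := by
  have (r : ℝ) : |(SignType.sign r : ℝ)| ≤ 1 := by
    rcases lt_trichotomy r 0 with hr | rfl | hr <;> simp [*]
  unfold dirSign; split_ifs <;> apply this

lemma eventually_sign_add_mul (a b : ℝ) :
    ∀ᶠ t in 𝓝[>] 0, (SignType.sign (a + t * b) : ℝ) = dirSign a b := by
  by_cases ha : a = 0
  · filter_upwards [self_mem_nhdsWithin] with t (ht : 0 < t)
    simp [dirSign, ha, sign_mul, sign_pos ht]
  · have hlim : Tendsto (fun t : ℝ => a + t * b) (𝓝[>] 0) (𝓝 a) := by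
      refine Tendsto.mono_left ?_ nhdsWithin_le_nhds
      exact (by fun_prop : Continuous fun t : ℝ => a + t * b).tendsto' 0 a (by simp)
    have hsign : ∀ᶠ y in 𝓝 a, SignType.sign y = SignType.sign a :=
      (continuousAt_sign_of_ne_zero ha).eventually_mem
        ((isOpen_discrete {SignType.sign a}).mem_nhds rfl)
    filter_upwards [hlim.eventually hsign] with t ht
    simp [dirSign, ha, ht]

lemma eventually_abs_add_mul (a b : ℝ) :
    ∀ᶠ t in 𝓝[>] 0, |a + t * b| = |a| + t * (dirSign a b * b) := by
  filter_upwards [eventually_sign_add_mul a b] with t ht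
  rw [← sign_mul_self, ht, ← dirSign_mul_self a b]
  ring

variable {m n : Type*} [Fintype m] [Fintype n]

noncomputable def penalizedMVO (yhat : n → ℝ) (V : Matrix n n ℝ) (E : Matrix m n ℝ) (γ : ℝ)
    (z : n → ℝ) : ℝ :=
  -(yhat ⬝ᵥ z) + (1 / 2) * (z ⬝ᵥ V *ᵥ z) + γ * ∑ i, |(E *ᵥ z) i|

def l1Subdifferential (γ : ℝ) (x : m → ℝ) : Set (m → ℝ) :=
  {v | (∀ i, |v i| ≤ γ) ∧ v ⬝ᵥ x = γ * ∑ i, |x i|}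

lemma dotProduct_mulVec_comm_of_isSymm {V : Matrix n n ℝ} (hV : V.IsSymm) (x y : n → ℝ) :
    x ⬝ᵥ V *ᵥ y = y ⬝ᵥ V *ᵥ x := by
  rw [← dotProduct_transpose_mulVec, hV.eq]

lemma dotProduct_le_mul_sum_abs {γ : ℝ} {v : m → ℝ} (hv : ∀ i, |v i| ≤ γ) (x : m → ℝ) :
    v ⬝ᵥ x ≤ γ * ∑ i, |x i| := by
  rw [dotProduct, Finset.mul_sum]
  refine Finset.sum_le_sum fun i _ => ?_
  calc v i * x i ≤ |v i| * |x i| := by rw [← abs_mul]; exact le_abs_self _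
    _ ≤ γ * |x i| := mul_le_mul_of_nonneg_right (hv i) (abs_nonneg _)

lemma convex_l1Subdifferential (γ : ℝ) (x : m → ℝ) : Convex ℝ (l1Subdifferential γ x) := by
  have hbox : Convex ℝ {v : m → ℝ | ∀ i, |v i| ≤ γ} := by
    rw [setOf_forall_abs_le_eq_pi]; exact convex_pi fun _ _ => convex_Icc _ _
  exact hbox.inter (convex_hyperplane (dotProductBilin ℝ ℝ |>.flip x).isLinear _)

lemma isCompact_l1Subdifferential (γ : ℝ) (x : m → ℝ) : IsCompact (l1Subdifferential γ x) := by
  have hbox : IsCompact {v : m → ℝ | ∀ i, |v i| ≤ γ} := by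
    rw [setOf_forall_abs_le_eq_pi]; exact isCompact_univ_pi fun _ => isCompact_Icc
  exact hbox.inter_right (isClosed_eq (by fun_prop) continuous_const)

lemma eventually_sum_abs_add_smul (x u : m → ℝ) :
    ∀ᶠ t in 𝓝[>] 0, ∑ i, |(x + t • u) i| =
      ∑ i, |x i| + t * ((fun i => dirSign (x i) (u i)) ⬝ᵥ u) := by
  filter_upwards [eventually_all.2 fun i => eventually_abs_add_mul (x i) (u i)] with t ht
  simp only [Pi.add_apply, Pi.smul_apply, smul_eq_mul, ht, Finset.sum_add_distrib, dotProduct,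
    Finset.mul_sum]

lemma smul_dirSign_mem_l1Subdifferential {γ : ℝ} (hγ : 0 ≤ γ) (x u : m → ℝ) :
    γ • (fun i => dirSign (x i) (u i)) ∈ l1Subdifferential γ x := by
  refine ⟨fun i => ?_, ?_⟩
  · simpa [abs_mul, abs_of_nonneg hγ] using mul_le_mul_of_nonneg_left (abs_dirSign_le_one _ _) hγ
  · simp [dotProduct, Finset.mul_sum, mul_assoc, dirSign_mul_self]

lemma penalizedMVO_eq_expansion (yhat : n → ℝ) {V : Matrix n n ℝ} (hV : V.IsSymm)
    (E : Matrix m n ℝ) (γ : ℝ) (z z' : n → ℝ) :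
    penalizedMVO yhat V E γ z' = penalizedMVO yhat V E γ z - (yhat - V *ᵥ z) ⬝ᵥ (z' - z) +
      1 / 2 * ((z' - z) ⬝ᵥ V *ᵥ (z' - z)) + γ * (∑ i, |(E *ᵥ z') i| - ∑ i, |(E *ᵥ z) i|) := by
  simp only [penalizedMVO, mulVec_sub, dotProduct_sub, sub_dotProduct,
    dotProduct_mulVec_comm_of_isSymm hV z z', dotProduct_comm _ z, dotProduct_comm _ z']
  ring

lemma penalizedMVO_le_of_mem_l1Subdifferential {yhat : n → ℝ} {V : Matrix n n ℝ}
    (hV : V.PosSemidef) {E : Matrix m n ℝ} {γ : ℝ} {zstar : n → ℝ} {v : m → ℝ}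
    (hv : v ∈ l1Subdifferential γ (E *ᵥ zstar)) (hVz : V *ᵥ zstar = yhat - Eᵀ *ᵥ v)
    (z : n → ℝ) : penalizedMVO yhat V E γ zstar ≤ penalizedMVO yhat V E γ z := by
  have hsymm : V.IsSymm := isHermitian_iff_isSymm.mp hV.isHermitian
  have hgrad : (yhat - V *ᵥ zstar) ⬝ᵥ (z - zstar) = v ⬝ᵥ E *ᵥ z - v ⬝ᵥ E *ᵥ zstar := by
    rw [hVz, sub_sub_cancel, dotProduct_comm, dotProduct_transpose_mulVec, mulVec_sub,
      dotProduct_sub]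
  have hcurv : 0 ≤ (z - zstar) ⬝ᵥ V *ᵥ (z - zstar) := by
    simpa using hV.dotProduct_mulVec_nonneg (z - zstar)
  rw [penalizedMVO_eq_expansion yhat hsymm E γ zstar z, hgrad]
  linarith [dotProduct_le_mul_sum_abs hv.1 (E *ᵥ z), hv.2]

lemma exists_mem_l1Subdifferential_dotProduct_le_of_forall_le {yhat : n → ℝ} {V : Matrix n n ℝ}
    (hV : V.IsSymm) {E : Matrix m n ℝ} {γ : ℝ} (hγ : 0 ≤ γ) {zstar : n → ℝ}
    (hmin : ∀ z, penalizedMVO yhat V E γ zstar ≤ penalizedMVO yhat V E γ z) (w : n → ℝ) :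
    ∃ v ∈ l1Subdifferential γ (E *ᵥ zstar), (yhat - V *ᵥ zstar) ⬝ᵥ w ≤ (Eᵀ *ᵥ v) ⬝ᵥ w := by
  set σ : m → ℝ := fun i => dirSign ((E *ᵥ zstar) i) ((E *ᵥ w) i)
  refine ⟨γ • σ, smul_dirSign_mem_l1Subdifferential hγ _ _, ?_⟩
  set Q := w ⬝ᵥ V *ᵥ w
  have hbound : ∀ᶠ t in 𝓝[>] 0,
      (yhat - V *ᵥ zstar) ⬝ᵥ w ≤ (Eᵀ *ᵥ (γ • σ)) ⬝ᵥ w + t / 2 * Q := by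
    filter_upwards [self_mem_nhdsWithin, eventually_sum_abs_add_smul (E *ᵥ zstar) (E *ᵥ w)]
      with t (ht : 0 < t) hl1
    have h := hmin (zstar + t • w)
    rw [penalizedMVO_eq_expansion yhat hV E γ zstar (zstar + t • w), add_sub_cancel_left,
      mulVec_add, mulVec_smul, mulVec_smul, hl1] at h
    rw [dotProduct_comm (Eᵀ *ᵥ _), dotProduct_transpose_mulVec]
    simp only [dotProduct_smul, smul_dotProduct, smul_eq_mul] at h ⊢
    nlinarith
  have hlim : Tendsto (fun t : ℝ => (Eᵀ *ᵥ (γ • σ)) ⬝ᵥ w + t / 2 * Q) (𝓝[>] 0)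
      (𝓝 ((Eᵀ *ᵥ (γ • σ)) ⬝ᵥ w)) :=
    ((by fun_prop : Continuous fun t : ℝ => (Eᵀ *ᵥ (γ • σ)) ⬝ᵥ w + t / 2 * Q).tendsto' 0 _
      (by simp)).mono_left nhdsWithin_le_nhds
  exact ge_of_tendsto hlim hbound

/-- Dual certificate characterization of optimality: `z*` is a global minimizer
of `−ŷᵀz + ½ zᵀVz + γ‖Ez‖₁` over `ℝ^d` iff there exists `v` with `‖v‖_∞ ≤ γ`,
`Vz* = ŷ − Eᵀv`, and `vᵀ(Ez*) = γ‖Ez*‖₁`. -/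
theorem stmt8 (d k : ℕ) (yhat : Fin d → ℝ)
    (V : Matrix (Fin d) (Fin d) ℝ) (hV : V.PosDef)
    (E : Matrix (Fin k) (Fin d) ℝ) (γ : ℝ) (hγ : 0 ≤ γ) (zstar : Fin d → ℝ) :
    (∀ z : Fin d → ℝ,
      -(yhat ⬝ᵥ zstar) + (1 / 2) * (zstar ⬝ᵥ V.mulVec zstar) +
          γ * ∑ i, |(E.mulVec zstar) i| ≤
        -(yhat ⬝ᵥ z) + (1 / 2) * (z ⬝ᵥ V.mulVec z) + γ * ∑ i, |(E.mulVec z) i|) ↔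
    (∃ v : Fin k → ℝ, (∀ i, |v i| ≤ γ) ∧
      V.mulVec zstar = yhat - Eᵀ.mulVec v ∧
      v ⬝ᵥ E.mulVec zstar = γ * ∑ i, |(E.mulVec zstar) i|) := by
  refine ⟨fun hmin => ?_, fun ⟨v, hvγ, hVz, hvx⟩ =>
    penalizedMVO_le_of_mem_l1Subdifferential hV.posSemidef ⟨hvγ, hvx⟩ hVz⟩
  set S := l1Subdifferential γ (E *ᵥ zstar)
  have hcert : yhat - V *ᵥ zstar ∈ (Eᵀ *ᵥ ·) '' S := by
    refine mem_of_forall_exists_dotProduct_le ((convex_l1Subdifferential _ _).linear_image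
      Eᵀ.mulVecLin) ((isCompact_l1Subdifferential _ _).image (by fun_prop)).isClosed fun w => ?_
    obtain ⟨v, hv, hle⟩ := exists_mem_l1Subdifferential_dotProduct_le_of_forall_le
      (isHermitian_iff_isSymm.mp hV.isHermitian) hγ hmin w
    exact ⟨_, mem_image_of_mem _ hv, hle⟩
  obtain ⟨v, ⟨hvγ, hvx⟩, hVz⟩ := hcert
  beta_reduce at hVz
  exact ⟨v, hvγ, by rw [hVz, sub_sub_cancel], hvx⟩
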